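/- arXiv:2408.13110 — 5 statements merged into one kernel-verified Lean document; each statement's English description precedes it below -/
import Mathlib

section
/- Let A, B ∈ ℝ^{2×2} be symmetric matrices with A ≠ B. Then A and B are compatible, i.e., there exist nonzero vectors a, b ∈ ℝ² such that A − B = (1/2)(a⊗b + b⊗a), if and only if det(A − B) ≤ 0. -/
open Matrix

noncomputable section

/-- Two matrices are compatible if their difference is a symmetrized rank-one matrix
`A - B = (1/2)(a ⊗ b + b ⊗ a)` with `a, b ≠ 0`. -/
def Compatible {d : ℕ} (A B : Matrix (Fin d) (Fin d) ℝ) : Prop :=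
  ∃ a b : Fin d → ℝ, a ≠ 0 ∧ b ≠ 0 ∧
    A - B = (1 / 2 : ℝ) • (vecMulVec a b + vecMulVec b a)

private lemma build_aux (C : Matrix (Fin 2) (Fin 2) ℝ) (a b : Fin 2 → ℝ)
    (h00 : C 0 0 = a 0 * b 0) (h01 : 2 * C 0 1 = a 0 * b 1 + b 0 * a 1)
    (h10 : 2 * C 1 0 = a 1 * b 0 + b 1 * a 0) (h11 : C 1 1 = a 1 * b 1) :
    C = (1 / 2 : ℝ) • (vecMulVec a b + vecMulVec b a) := by
  ext i j
  fin_cases i <;> fin_cases j <;>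
    simp only [Fin.zero_eta, Fin.mk_one, Matrix.smul_apply, Matrix.add_apply,
      Matrix.vecMulVec_apply, smul_eq_mul] <;> linarith

/-- two distinct symmetric `2×2` matrices are compatible iff `det (A - B) ≤ 0`. -/
theorem stmt0 (A B : Matrix (Fin 2) (Fin 2) ℝ)
    (hA : A.IsSymm) (hB : B.IsSymm) (hAB : A ≠ B) :
    Compatible A B ↔ (A - B).det ≤ 0 := by
  have hC0 : A - B ≠ 0 := sub_ne_zero.mpr hAB
  have hsymm : (A - B) 1 0 = (A - B) 0 1 := by
    have h1 : A 0 1 = A 1 0 := hA.apply 1 0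
    have h2 : B 0 1 = B 1 0 := hB.apply 1 0
    simp [Matrix.sub_apply, ← h1, ← h2]
  constructor
  · rintro ⟨a, b, ha, hb, hEq⟩
    have h00 := congrFun (congrFun hEq 0) 0
    have h01 := congrFun (congrFun hEq 0) 1
    have h10 := congrFun (congrFun hEq 1) 0
    have h11 := congrFun (congrFun hEq 1) 1
    simp only [Matrix.smul_apply, Matrix.add_apply, Matrix.vecMulVec_apply,
      smul_eq_mul] at h00 h01 h10 h11
    rw [Matrix.det_fin_two, h00, h01, h10, h11]
    nlinarith [sq_nonneg (a 0 * b 1 - a 1 * b 0)]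
  · intro hdet
    obtain ⟨p, q, r, hp_def, hq_def, hr_def⟩ :
        ∃ p q r, (A - B) 0 0 = p ∧ (A - B) 0 1 = q ∧ (A - B) 1 1 = r :=
      ⟨_, _, _, rfl, rfl, rfl⟩
    rw [hq_def] at hsymm
    rw [Matrix.det_fin_two, hsymm, hp_def, hq_def, hr_def] at hdet
    have hpr : 0 ≤ q ^ 2 - p * r := by nlinarith
    have hD2 : Real.sqrt (q ^ 2 - p * r) ^ 2 = q ^ 2 - p * r := Real.sq_sqrt hpr
    set D := Real.sqrt (q ^ 2 - p * r) with hD_def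
    by_cases hp : p = 0
    · by_cases hr : r = 0
      · have hq : q ≠ 0 := by
          intro h
          apply hC0
          ext i j
          fin_cases i <;> fin_cases j <;>
            simp only [Fin.zero_eta, Fin.mk_one, Matrix.zero_apply]
          · exact hp_def.trans hp
          · exact hq_def.trans h
          · exact hsymm.trans h
          · exact hr_def.trans hr
        refine ⟨![2 * q, 0], ![0, 1], ?_, ?_,
          build_aux _ _ _ ?_ ?_ ?_ ?_⟩
        · intro h
          have := congrFun h 0
          simp at this
          exact hq this
        · intro h
          have := congrFun h 1
          simp at this
        all_goals
          simp only [hp_def, hq_def, hr_def, hsymm, Matrix.cons_val_zero,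
            Matrix.cons_val_one, Matrix.head_cons]
        · rw [hp]; ring
        · ring
        · ring
        · rw [hr]; ring
      · -- p = 0, r ≠ 0
        have hD2' : D ^ 2 = q ^ 2 := by rw [hD2, hp]; ring
        refine ⟨![q - D, r], ![(q + D) / r, 1], ?_, ?_,
          build_aux _ _ _ ?_ ?_ ?_ ?_⟩
        · intro h
          have := congrFun h 1
          simp at this
          exact hr this
        · intro h
          have := congrFun h 1
          simp at this
        all_goals
          simp only [hp_def, hq_def, hr_def, hsymm, Matrix.cons_val_zero,
            Matrix.cons_val_one, Matrix.head_cons]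
        · rw [hp, mul_div_assoc', show (q - D) * (q + D) = 0 by nlinarith [hD2'],
            zero_div]
        · field_simp; ring
        · field_simp; ring
        · field_simp
    · -- p ≠ 0
      refine ⟨![p, q - D], ![1, (q + D) / p], ?_, ?_,
        build_aux _ _ _ ?_ ?_ ?_ ?_⟩
      · intro h
        have := congrFun h 0
        simp at this
        exact hp this
      · intro h
        have := congrFun h 0
        simp at this
      all_goals
        simp only [hp_def, hq_def, hr_def, hsymm, Matrix.cons_val_zero,
          Matrix.cons_val_one, Matrix.head_cons]
      · ring
      · field_simp; ring
      · field_simp; ring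
      · field_simp; nlinarith [hD2]
end
end

section
/- There exist no T₃-structures for the symmetrized gradient in the 2×2 symmetric matrices: there do not exist pairwise distinct, pairwise incompatible symmetric matrices A₁, A₂, A₃ ∈ ℝ^{2×2} together with λ₁, λ₂, λ₃ ∈ (0,1) such that J̃₁ = λ₁A₂ + (1−λ₁)A₃ is compatible with A₁, J̃₂ = λ₂A₃ + (1−λ₂)A₁ is compatible with A₂, and J̃₃ = λ₃A₁ + (1−λ₃)A₂ is compatible with A₃. -/
open Matrix

noncomputable section

lemma rank_one_decomp' (p q r : ℝ) (hnz : ¬ (p = 0 ∧ q = 0 ∧ r = 0))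
    (hdet : p * r - q * q ≤ 0) :
    ∃ a b : Fin 2 → ℝ, a ≠ 0 ∧ b ≠ 0 ∧
      (!![p, q; q, r] : Matrix (Fin 2) (Fin 2) ℝ)
        = (1 / 2 : ℝ) • (vecMulVec a b + vecMulVec b a) := by
  by_cases hp : p ≠ 0
  · obtain ⟨s, hs2⟩ : ∃ s : ℝ, s ^ 2 = q ^ 2 - p * r :=
      ⟨Real.sqrt _, Real.sq_sqrt (by nlinarith)⟩
    refine ⟨![p, q + s], ![1, (q - s) / p], ?_, ?_, ?_⟩
    · intro h; exact hp (by simpa using congrFun h 0)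
    · intro h; simpa using congrFun h 0
    · ext i j
      fin_cases i <;> fin_cases j <;>
        simp [Matrix.smul_apply, Matrix.add_apply, vecMulVec_apply] <;>
        field_simp <;>
        first
          | ring1
          | linear_combination (2 : ℝ) * hs2
  · push_neg at hp
    subst hp
    by_cases hr : r ≠ 0
    · obtain ⟨s, hs2⟩ : ∃ s : ℝ, s ^ 2 = q ^ 2 :=
        ⟨Real.sqrt _, Real.sq_sqrt (by positivity)⟩
      refine ⟨![q + s, r], ![(q - s) / r, 1], ?_, ?_, ?_⟩
      · intro h; exact hr (by simpa using congrFun h 1)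
      · intro h; simpa using congrFun h 1
      · ext i j
        fin_cases i <;> fin_cases j <;>
          simp [Matrix.smul_apply, Matrix.add_apply, vecMulVec_apply] <;>
          field_simp <;>
          first
            | ring1
            | linear_combination (-2 : ℝ) * hs2
    · push_neg at hr
      subst hr
      have hq : q ≠ 0 := by
        intro hq; exact hnz ⟨rfl, hq, rfl⟩
      refine ⟨![2 * q, 0], ![0, 1], ?_, ?_, ?_⟩
      · intro h
        have := congrFun h 0
        simp at this
        exact hq this
      · intro h; simpa using congrFun h 1
      · ext i j
        fin_cases i <;> fin_cases j <;>
          simp [Matrix.smul_apply, Matrix.add_apply, vecMulVec_apply] <;> ring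

lemma rank_one_decomp (M : Matrix (Fin 2) (Fin 2) ℝ) (hsym : M 1 0 = M 0 1)
    (hnz : M ≠ 0) (hdet : M 0 0 * M 1 1 - M 0 1 * M 0 1 ≤ 0) :
    ∃ a b : Fin 2 → ℝ, a ≠ 0 ∧ b ≠ 0 ∧
      M = (1 / 2 : ℝ) • (vecMulVec a b + vecMulVec b a) := by
  have hM : M = !![M 0 0, M 0 1; M 0 1, M 1 1] := by
    conv_lhs => rw [Matrix.eta_fin_two M]
    rw [hsym]
  obtain ⟨a, b, ha, hb, h⟩ := rank_one_decomp' (M 0 0) (M 0 1) (M 1 1)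
    (by rintro ⟨h1, h2, h3⟩; exact hnz (by rw [hM, h1, h2, h3]; ext i j; fin_cases i <;> fin_cases j <;> simp))
    hdet
  exact ⟨a, b, ha, hb, by rw [hM, h]⟩

lemma key (dX dY b μ ν : ℝ) (h2 : 0 < dY) (h3 : 0 < dX + b + dY)
    (hμ0 : 0 < μ) (hμ1 : μ < 1) (hν0 : 0 < ν) (hν1 : ν < 1)
    (h4 : dX + μ*b + μ^2*dY ≤ 0) (h5 : ν^2*dX + ν*b + dY ≤ 0) : False := by
  have hmn : 0 < 1 - μ*ν := by nlinarith
  nlinarith [mul_nonneg (mul_nonneg hν0.le (sub_pos.mpr hν1).le) (neg_nonneg.mpr h4),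
    mul_nonneg (sub_pos.mpr hμ1).le (neg_nonneg.mpr h5),
    mul_pos (mul_pos h2 (mul_pos (sub_pos.mpr hμ1) (sub_pos.mpr hν1))) hmn,
    mul_pos (mul_pos hν0 hmn) h3]

lemma det_ineq_of_compat (A B : Matrix (Fin 2) (Fin 2) ℝ) (h : Compatible A B) :
    (A 0 0 - B 0 0) * (A 1 1 - B 1 1) - (A 0 1 - B 0 1) * (A 1 0 - B 1 0) ≤ 0 := by
  obtain ⟨a, b, -, -, h⟩ := h
  have h00 := congrFun (congrFun h 0) 0
  have h01 := congrFun (congrFun h 0) 1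
  have h10 := congrFun (congrFun h 1) 0
  have h11 := congrFun (congrFun h 1) 1
  simp only [Matrix.sub_apply, Matrix.smul_apply, Matrix.add_apply, vecMulVec_apply,
    smul_eq_mul] at h00 h01 h10 h11
  rw [h00, h01, h10, h11]
  nlinarith [sq_nonneg (a 0 * b 1 - a 1 * b 0)]

lemma compat_of_det (A B : Matrix (Fin 2) (Fin 2) ℝ) (hA : A.IsSymm) (hB : B.IsSymm)
    (hne : A ≠ B)
    (hd : (A 0 0 - B 0 0) * (A 1 1 - B 1 1) - (A 0 1 - B 0 1) * (A 0 1 - B 0 1) ≤ 0) :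
    Compatible A B := by
  obtain ⟨a, b, ha, hb, h⟩ := rank_one_decomp (A - B)
    (by simp only [Matrix.sub_apply]; rw [hA.apply 0 1, hB.apply 0 1])
    (sub_ne_zero_of_ne hne)
    (by simp only [Matrix.sub_apply]; linarith)
  exact ⟨a, b, ha, hb, h⟩


set_option maxHeartbeats 2000000 in
/-- there are no T₃-structures for the symmetrized gradient in `ℝ^{2×2}_sym`. -/
theorem stmt1 :
    ¬ ∃ (A₁ A₂ A₃ : Matrix (Fin 2) (Fin 2) ℝ) (lam₁ lam₂ lam₃ : ℝ),
      A₁.IsSymm ∧ A₂.IsSymm ∧ A₃.IsSymm ∧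
      A₁ ≠ A₂ ∧ A₂ ≠ A₃ ∧ A₁ ≠ A₃ ∧
      ¬ Compatible A₁ A₂ ∧ ¬ Compatible A₂ A₃ ∧ ¬ Compatible A₁ A₃ ∧
      lam₁ ∈ Set.Ioo (0 : ℝ) 1 ∧ lam₂ ∈ Set.Ioo (0 : ℝ) 1 ∧ lam₃ ∈ Set.Ioo (0 : ℝ) 1 ∧
      Compatible (lam₁ • A₂ + (1 - lam₁) • A₃) A₁ ∧
      Compatible (lam₂ • A₃ + (1 - lam₂) • A₁) A₂ ∧
      Compatible (lam₃ • A₁ + (1 - lam₃) • A₂) A₃ := by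
  rintro ⟨A₁, A₂, A₃, l1, l2, l3, h1s, h2s, h3s, h12, h23, h13,
    i12, i23, i13, ⟨hl1a, hl1b⟩, ⟨hl2a, hl2b⟩, ⟨hl3a, hl3b⟩, c1, c2, c3⟩
  have s1 : A₁ 1 0 = A₁ 0 1 := h1s.apply 0 1
  have s2 : A₂ 1 0 = A₂ 0 1 := h2s.apply 0 1
  have s3 : A₃ 1 0 = A₃ 0 1 := h3s.apply 0 1
  have d12 : 0 < (A₁ 0 0 - A₂ 0 0) * (A₁ 1 1 - A₂ 1 1) - (A₁ 0 1 - A₂ 0 1) * (A₁ 0 1 - A₂ 0 1) := by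
    by_contra h
    push_neg at h
    exact i12 (compat_of_det _ _ h1s h2s h12 h)
  have d23 : 0 < (A₂ 0 0 - A₃ 0 0) * (A₂ 1 1 - A₃ 1 1) - (A₂ 0 1 - A₃ 0 1) * (A₂ 0 1 - A₃ 0 1) := by
    by_contra h
    push_neg at h
    exact i23 (compat_of_det _ _ h2s h3s h23 h)
  have d13 : 0 < (A₁ 0 0 - A₃ 0 0) * (A₁ 1 1 - A₃ 1 1) - (A₁ 0 1 - A₃ 0 1) * (A₁ 0 1 - A₃ 0 1) := by
    by_contra h
    push_neg at h
    exact i13 (compat_of_det _ _ h1s h3s h13 h)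
  have e1 := det_ineq_of_compat _ _ c1
  have e3 := det_ineq_of_compat _ _ c3
  simp only [Matrix.add_apply, Matrix.smul_apply, smul_eq_mul, s1, s2, s3] at e1 e3
  refine key ((A₁ 0 0 - A₂ 0 0) * (A₁ 1 1 - A₂ 1 1) - (A₁ 0 1 - A₂ 0 1) * (A₁ 0 1 - A₂ 0 1))
    ((A₂ 0 0 - A₃ 0 0) * (A₂ 1 1 - A₃ 1 1) - (A₂ 0 1 - A₃ 0 1) * (A₂ 0 1 - A₃ 0 1))
    ((A₁ 0 0 - A₂ 0 0) * (A₂ 1 1 - A₃ 1 1) + (A₂ 0 0 - A₃ 0 0) * (A₁ 1 1 - A₂ 1 1)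
      - 2 * (A₁ 0 1 - A₂ 0 1) * (A₂ 0 1 - A₃ 0 1))
    (1 - l1) l3 d23 (by nlinarith [d13]) (by linarith) (by linarith) hl3a hl3b
    (by nlinarith [e1]) (by nlinarith [e3])
end
end

section
/- Assume the ellipticity conditions η₂ < η₁ < η₃ and η₂ + η₃ > 2η₁. Then the three wells e^{(1)}, e^{(2)}, e^{(3)} are pairwise incompatible: for every i ≠ j there exist no nonzero vectors a, b ∈ ℝ³ such that e^{(i)} − e^{(j)} = (1/2)(a⊗b + b⊗a). -/
open Matrix

noncomputable section

/-- The three wells `e⁽¹⁾ = diag(η₃, η₁, η₂)`, `e⁽²⁾ = diag(η₂, η₃, η₁)`,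
`e⁽³⁾ = diag(η₁, η₂, η₃)` (0-indexed). -/
def well3 (η₁ η₂ η₃ : ℝ) : Fin 3 → Matrix (Fin 3) (Fin 3) ℝ :=
  ![Matrix.diagonal ![η₃, η₁, η₂], Matrix.diagonal ![η₂, η₃, η₁], Matrix.diagonal ![η₁, η₂, η₃]]

/-- A symmetrized rank-one `3 × 3` matrix has zero determinant. -/
lemma det_symrank (a b : Fin 3 → ℝ) :
    Matrix.det ((1 / 2 : ℝ) • (vecMulVec a b + vecMulVec b a)) = 0 := by
  simp only [Matrix.det_fin_three, Matrix.smul_apply, Matrix.add_apply, vecMulVec_apply,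
    smul_eq_mul]
  ring

/-- under the ellipticity conditions the three wells are pairwise incompatible. -/
theorem stmt2 (η₁ η₂ η₃ : ℝ) (h1 : η₂ < η₁) (h2 : η₁ < η₃) (h3 : 2 * η₁ < η₂ + η₃) :
    ∀ i j : Fin 3, i ≠ j → ¬ Compatible (well3 η₁ η₂ η₃ i) (well3 η₁ η₂ η₃ j) := by
  intro i j hij ⟨a, b, ha, hb, heq⟩
  have hd := congrArg Matrix.det heq
  rw [det_symrank] at hd
  fin_cases i <;> fin_cases j <;>
    first
    | exact hij rfl
    | · simp [well3, Matrix.diagonal_sub, Matrix.det_diagonal, Fin.prod_univ_three] at hd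
        rcases hd with (h | h) | h <;> linarith
end
end

section
/- Assume the ellipticity conditions η₂ < η₁ < η₃ and η₂ + η₃ > 2η₁. Then for all pairwise distinct i, ℓ, m ∈ {1,2,3} one has J_ℓ − J_i = (κ − η₁) ε_{iℓm} (b_{iℓ}⊗b_{ℓi} + b_{ℓi}⊗b_{iℓ}), where ε_{iℓm} is the Levi-Civita symbol (ε_{iℓm} = 1 for even permutations of (1,2,3), −1 for odd permutations). Moreover, for every i ∈ {1,2,3}, setting j = i − 1 for i ∈ {2,3} and j = 3 for i = 1, one has e^{(i)} − J_i = (η₁ − η₂)(b_{ij}⊗b_{ji} + b_{ji}⊗b_{ij}) and J_j − e^{(i)} = (η₁ − η₃)(b_{ij}⊗b_{ji} + b_{ji}⊗b_{ij}). In particular the matrices J₁, J₂, J₃ are pairwise symmetrized rank-one connected, and each e^{(i)} is symmetrized rank-one connected to J_i and to J_j. -/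
open Matrix

noncomputable section

/-- The auxiliary matrices `J₁ = diag(κ, η₁, η₁)`, `J₂ = diag(η₁, κ, η₁)`,
`J₃ = diag(η₁, η₁, κ)` with `κ = η₂ + η₃ - η₁` (0-indexed). -/
def Jmat3 (η₁ η₂ η₃ : ℝ) : Fin 3 → Matrix (Fin 3) (Fin 3) ℝ :=
  ![Matrix.diagonal ![η₂ + η₃ - η₁, η₁, η₁],
    Matrix.diagonal ![η₁, η₂ + η₃ - η₁, η₁],
    Matrix.diagonal ![η₁, η₁, η₂ + η₃ - η₁]]

/-- The twin direction unit vectors `b_{ij}` (0-indexed; diagonal entries are unused dummies). -/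
def bv : Fin 3 → Fin 3 → (Fin 3 → ℝ) :=
  ![![0, (Real.sqrt 2)⁻¹ • ![1, 1, 0], (Real.sqrt 2)⁻¹ • ![1, 0, -1]],
    ![(Real.sqrt 2)⁻¹ • ![-1, 1, 0], 0, (Real.sqrt 2)⁻¹ • ![0, 1, 1]],
    ![(Real.sqrt 2)⁻¹ • ![1, 0, 1], (Real.sqrt 2)⁻¹ • ![0, -1, 1], 0]]

/-- The Levi-Civita symbol on `Fin 3` (equal to `1` on even permutations of `(0,1,2)`,
`-1` on odd permutations, `0` otherwise). -/
def lc (i l m : Fin 3) : ℝ :=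
  (((l : ℕ) : ℝ) - ((i : ℕ) : ℝ)) * (((m : ℕ) : ℝ) - ((i : ℕ) : ℝ)) *
    (((m : ℕ) : ℝ) - ((l : ℕ) : ℝ)) / 2

lemma sqrt2_key : (Real.sqrt 2)⁻¹ * (Real.sqrt 2)⁻¹ = 1/2 := by
  rw [← mul_inv, Real.mul_self_sqrt (by norm_num)]; norm_num

lemma sqrt2_inv_ne : (Real.sqrt 2)⁻¹ ≠ 0 := by
  positivity

lemma bv_ne_zero : ∀ i l : Fin 3, i ≠ l → bv i l ≠ 0 := by
  intro i l h hc
  have h0 := congrFun hc 0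
  have h1 := congrFun hc 1
  have h2 := congrFun hc 2
  fin_cases i <;> fin_cases l <;>
    first
      | exact h rfl
      | simp [bv, sqrt2_inv_ne] at h0 h1 h2

lemma comp_of {A B : Matrix (Fin 3) (Fin 3) ℝ} {c : ℝ} (hc : c ≠ 0)
    {u v : Fin 3 → ℝ} (hu : u ≠ 0) (hv : v ≠ 0)
    (h : A - B = c • (vecMulVec u v + vecMulVec v u)) : Compatible A B := by
  refine ⟨(2 * c) • u, v, ?_, hv, ?_⟩
  · simpa [smul_eq_zero, hc] using hu
  · rw [h]
    ext a b
    simp [vecMulVec, Matrix.smul_apply, Matrix.add_apply]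
    ring

set_option maxHeartbeats 1000000 in
/-- the algebraic symmetrized rank-one relations between the auxiliary matrices
`J_i` and the wells `e⁽ⁱ⁾` (Lemma 3.3 of BFJK94).  Here (0-indexed) `j = i + 2 (mod 3)`
corresponds to `j = i - 1 (mod 3)` for 1-based indices. -/
theorem stmt3 (η₁ η₂ η₃ : ℝ) (h1 : η₂ < η₁) (h2 : η₁ < η₃) (h3 : 2 * η₁ < η₂ + η₃) :
    (∀ i l m : Fin 3, i ≠ l → l ≠ m → i ≠ m →
      Jmat3 η₁ η₂ η₃ l - Jmat3 η₁ η₂ η₃ i =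
        (((η₂ + η₃ - η₁) - η₁) * lc i l m) •
          (vecMulVec (bv i l) (bv l i) + vecMulVec (bv l i) (bv i l))) ∧
    (∀ i j : Fin 3, j = i + 2 →
      (well3 η₁ η₂ η₃ i - Jmat3 η₁ η₂ η₃ i =
        (η₁ - η₂) • (vecMulVec (bv i j) (bv j i) + vecMulVec (bv j i) (bv i j))) ∧
      (Jmat3 η₁ η₂ η₃ j - well3 η₁ η₂ η₃ i =
        (η₁ - η₃) • (vecMulVec (bv i j) (bv j i) + vecMulVec (bv j i) (bv i j)))) ∧
    (∀ i l : Fin 3, i ≠ l → Compatible (Jmat3 η₁ η₂ η₃ l) (Jmat3 η₁ η₂ η₃ i)) ∧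
    (∀ i j : Fin 3, j = i + 2 →
      Compatible (well3 η₁ η₂ η₃ i) (Jmat3 η₁ η₂ η₃ i) ∧
      Compatible (well3 η₁ η₂ η₃ i) (Jmat3 η₁ η₂ η₃ j)) := by
  have key := sqrt2_key
  have P1 : ∀ i l m : Fin 3, i ≠ l → l ≠ m → i ≠ m →
      Jmat3 η₁ η₂ η₃ l - Jmat3 η₁ η₂ η₃ i =
        (((η₂ + η₃ - η₁) - η₁) * lc i l m) •
          (vecMulVec (bv i l) (bv l i) + vecMulVec (bv l i) (bv i l)) := by
    intro i l m hil hlm him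
    fin_cases i <;> fin_cases l <;> fin_cases m <;>
      first
      | exact absurd rfl hil
      | exact absurd rfl hlm
      | exact absurd rfl him
      | (ext a b
         fin_cases a <;> fin_cases b <;>
           simp [Jmat3, bv, lc, vecMulVec, Matrix.diagonal] <;>
           (try rw [key]) <;> ring)
  have P2 : ∀ i j : Fin 3, j = i + 2 →
      (well3 η₁ η₂ η₃ i - Jmat3 η₁ η₂ η₃ i =
        (η₁ - η₂) • (vecMulVec (bv i j) (bv j i) + vecMulVec (bv j i) (bv i j))) ∧
      (Jmat3 η₁ η₂ η₃ j - well3 η₁ η₂ η₃ i =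
        (η₁ - η₃) • (vecMulVec (bv i j) (bv j i) + vecMulVec (bv j i) (bv i j))) := by
    intro i j hj
    subst hj
    fin_cases i <;>
      refine ⟨?_, ?_⟩ <;>
      · ext a b
        fin_cases a <;> fin_cases b <;>
          simp [Jmat3, well3, bv, vecMulVec, Matrix.diagonal] <;>
          (try rw [key]) <;> ring
  refine ⟨P1, P2, ?_, ?_⟩
  · intro i l hil
    obtain ⟨m, hlm, him⟩ : ∃ m : Fin 3, l ≠ m ∧ i ≠ m := by
      fin_cases i <;> fin_cases l <;> simp_all <;> decide
    refine comp_of ?_ (bv_ne_zero i l hil) (bv_ne_zero l i (Ne.symm hil)) (P1 i l m hil hlm him)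
    have hk : η₂ + η₃ - η₁ - η₁ ≠ 0 := by linarith
    have hlc : lc i l m ≠ 0 := by
      fin_cases i <;> fin_cases l <;> fin_cases m <;> simp_all [lc] <;> norm_num
    exact mul_ne_zero hk hlc
  · intro i j hj
    have hij : i ≠ j := by subst hj; fin_cases i <;> decide
    constructor
    · exact comp_of (by intro h; apply absurd h; intro h'; linarith [sub_eq_zero.mp h'])
        (bv_ne_zero i j hij) (bv_ne_zero j i (Ne.symm hij)) (P2 i j hj).1
    · have h := (P2 i j hj).2
      have h' : well3 η₁ η₂ η₃ i - Jmat3 η₁ η₂ η₃ j =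
          (η₃ - η₁) • (vecMulVec (bv i j) (bv j i) + vecMulVec (bv j i) (bv i j)) := by
        have := congrArg Neg.neg h
        rw [neg_sub] at this
        rw [this, ← neg_smul]
        ring_nf
      exact comp_of (by intro h; apply absurd h; intro h'; linarith [sub_eq_zero.mp h'])
        (bv_ne_zero i j hij) (bv_ne_zero j i (Ne.symm hij)) h'
end
end

section
/- Assume the ellipticity conditions η₂ < η₁ < η₃ and η₂ + η₃ > 2η₁. Then the seven values 0, ±(η₃−η₂), ±(η₁−η₂), ±(η₃−η₁) are pairwise distinct, and for every j, k ∈ {1,2,3} there exists a function P: ℝ → ℝ such that A_{kk} − B_{kk} = P(A_{jj} − B_{jj}) for all A, B ∈ K₃; equivalently, for all A, B, A′, B′ ∈ K₃ with A_{jj} − B_{jj} = A′_{jj} − B′_{jj} one has A_{kk} − B_{kk} = A′_{kk} − B′_{kk}. -/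
open Matrix

noncomputable section

/-- The set `K₃ = {e⁽¹⁾, e⁽²⁾, e⁽³⁾}`. -/
def K3 (η₁ η₂ η₃ : ℝ) : Set (Matrix (Fin 3) (Fin 3) ℝ) :=
  {well3 η₁ η₂ η₃ 0, well3 η₁ η₂ η₃ 1, well3 η₁ η₂ η₃ 2}

lemma key3 (w : Fin 3 → ℝ)
    (h01 : w 0 ≠ w 1) (h02 : w 0 ≠ w 2) (h12 : w 1 ≠ w 2)
    (m0 : w 1 + w 2 ≠ 2 * w 0) (m1 : w 0 + w 2 ≠ 2 * w 1) (m2 : w 0 + w 1 ≠ 2 * w 2)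
    (a b a' b' : Fin 3) (h : w a - w b = w a' - w b') :
    (a = a' ∧ b = b') ∨ (a = b ∧ a' = b') := by
  fin_cases a <;> fin_cases b <;> fin_cases a' <;> fin_cases b' <;>
    simp only [Fin.isValue, Fin.mk_zero, Fin.mk_one,
      show (⟨2, by norm_num⟩ : Fin 3) = 2 from rfl, Fin.zero_eta] at h <;>
    first
      | exact Or.inl ⟨rfl, rfl⟩
      | exact Or.inr ⟨rfl, rfl⟩
      | (exfalso; first
          | exact h01 (by linarith)
          | exact h02 (by linarith)
          | exact h12 (by linarith)
          | exact h01.symm (by linarith)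
          | exact h02.symm (by linarith)
          | exact h12.symm (by linarith)
          | exact m0 (by linarith)
          | exact m1 (by linarith)
          | exact m2 (by linarith))

lemma wfacts (η₁ η₂ η₃ : ℝ) (h1 : η₂ < η₁) (h2 : η₁ < η₃) (h3 : 2 * η₁ < η₂ + η₃) (j : Fin 3) :
    well3 η₁ η₂ η₃ 0 j j ≠ well3 η₁ η₂ η₃ 1 j j ∧
    well3 η₁ η₂ η₃ 0 j j ≠ well3 η₁ η₂ η₃ 2 j j ∧
    well3 η₁ η₂ η₃ 1 j j ≠ well3 η₁ η₂ η₃ 2 j j ∧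
    well3 η₁ η₂ η₃ 1 j j + well3 η₁ η₂ η₃ 2 j j ≠ 2 * well3 η₁ η₂ η₃ 0 j j ∧
    well3 η₁ η₂ η₃ 0 j j + well3 η₁ η₂ η₃ 2 j j ≠ 2 * well3 η₁ η₂ η₃ 1 j j ∧
    well3 η₁ η₂ η₃ 0 j j + well3 η₁ η₂ η₃ 1 j j ≠ 2 * well3 η₁ η₂ η₃ 2 j j := by
  fin_cases j <;> simp only [well3, Matrix.cons_val_zero, Matrix.cons_val_one, Matrix.head_cons,
    Matrix.cons_val_two, Matrix.tail_cons, Matrix.diagonal_apply_eq, Fin.isValue, Fin.mk_zero,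
    Fin.mk_one, show (⟨2, by norm_num⟩ : Fin 3) = 2 from rfl, Fin.zero_eta] <;>
    refine ⟨?_, ?_, ?_, ?_, ?_, ?_⟩ <;> intro hh <;> linarith

lemma mem_K3_iff (η₁ η₂ η₃ : ℝ) (A : Matrix (Fin 3) (Fin 3) ℝ) :
    A ∈ K3 η₁ η₂ η₃ ↔ ∃ i : Fin 3, A = well3 η₁ η₂ η₃ i := by
  constructor
  · intro hA
    rcases hA with rfl | rfl | rfl
    exacts [⟨0, rfl⟩, ⟨1, rfl⟩, ⟨2, rfl⟩]
  · rintro ⟨i, rfl⟩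
    fin_cases i
    exacts [Set.mem_insert _ _, Set.mem_insert_of_mem _ (Set.mem_insert _ _),
      Set.mem_insert_of_mem _ (Set.mem_insert_of_mem _ rfl)]

lemma part3 (η₁ η₂ η₃ : ℝ) (h1 : η₂ < η₁) (h2 : η₁ < η₃) (h3 : 2 * η₁ < η₂ + η₃)
    (j k : Fin 3) (A B A' B' : Matrix (Fin 3) (Fin 3) ℝ)
    (hA : A ∈ K3 η₁ η₂ η₃) (hB : B ∈ K3 η₁ η₂ η₃) (hA' : A' ∈ K3 η₁ η₂ η₃)
    (hB' : B' ∈ K3 η₁ η₂ η₃) (h : A j j - B j j = A' j j - B' j j) :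
    A k k - B k k = A' k k - B' k k := by
  obtain ⟨a, rfl⟩ := (mem_K3_iff η₁ η₂ η₃ A).1 hA
  obtain ⟨b, rfl⟩ := (mem_K3_iff η₁ η₂ η₃ B).1 hB
  obtain ⟨a', rfl⟩ := (mem_K3_iff η₁ η₂ η₃ A').1 hA'
  obtain ⟨b', rfl⟩ := (mem_K3_iff η₁ η₂ η₃ B').1 hB'
  obtain ⟨f1, f2, f3, f4, f5, f6⟩ := wfacts η₁ η₂ η₃ h1 h2 h3 j
  rcases key3 (fun i => well3 η₁ η₂ η₃ i j j) f1 f2 f3 f4 f5 f6 a b a' b' h with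
    ⟨rfl, rfl⟩ | ⟨rfl, rfl⟩
  · rfl
  · simp

/-- determinedness of the wells. The seven values
`0, ±(η₃−η₂), ±(η₁−η₂), ±(η₃−η₁)` are pairwise distinct, and each diagonal difference
determines all the others. -/
theorem stmt6 (η₁ η₂ η₃ : ℝ) (h1 : η₂ < η₁) (h2 : η₁ < η₃) (h3 : 2 * η₁ < η₂ + η₃) :
    Function.Injective
      (![0, η₃ - η₂, -(η₃ - η₂), η₁ - η₂, -(η₁ - η₂), η₃ - η₁, -(η₃ - η₁)] : Fin 7 → ℝ) ∧
    (∀ j k : Fin 3, ∃ P : ℝ → ℝ, ∀ A B : Matrix (Fin 3) (Fin 3) ℝ,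
      A ∈ K3 η₁ η₂ η₃ → B ∈ K3 η₁ η₂ η₃ → A k k - B k k = P (A j j - B j j)) ∧
    (∀ j k : Fin 3, ∀ A B A' B' : Matrix (Fin 3) (Fin 3) ℝ,
      A ∈ K3 η₁ η₂ η₃ → B ∈ K3 η₁ η₂ η₃ → A' ∈ K3 η₁ η₂ η₃ → B' ∈ K3 η₁ η₂ η₃ →
      A j j - B j j = A' j j - B' j j → A k k - B k k = A' k k - B' k k) := by
  refine ⟨?_, ?_, fun j k A B A' B' hA hB hA' hB' h =>
    part3 η₁ η₂ η₃ h1 h2 h3 j k A B A' B' hA hB hA' hB' h⟩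
  · intro x y hxy
    fin_cases x <;> fin_cases y <;> first
      | rfl
      | (exfalso;
         simp at hxy;
         try simp only [show (![0, η₃ - η₂, η₂ - η₃, η₁ - η₂, η₂ - η₁, η₃ - η₁, η₁ - η₃] :
             Fin 7 → ℝ) 5 = η₃ - η₁ from rfl,
           show (![0, η₃ - η₂, η₂ - η₃, η₁ - η₂, η₂ - η₁, η₃ - η₁, η₁ - η₃] :
             Fin 7 → ℝ) 6 = η₁ - η₃ from rfl] at hxy;
         linarith)
  · intro j k
    classical
    refine ⟨fun x => if hx : ∃ p : Fin 3 × Fin 3,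
        well3 η₁ η₂ η₃ p.1 j j - well3 η₁ η₂ η₃ p.2 j j = x then
        well3 η₁ η₂ η₃ hx.choose.1 k k - well3 η₁ η₂ η₃ hx.choose.2 k k else 0, ?_⟩
    intro A B hA hB
    obtain ⟨a, rfl⟩ := (mem_K3_iff η₁ η₂ η₃ A).1 hA
    obtain ⟨b, rfl⟩ := (mem_K3_iff η₁ η₂ η₃ B).1 hB
    have hx : ∃ p : Fin 3 × Fin 3, well3 η₁ η₂ η₃ p.1 j j - well3 η₁ η₂ η₃ p.2 j j =
        well3 η₁ η₂ η₃ a j j - well3 η₁ η₂ η₃ b j j := ⟨(a, b), rfl⟩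
    beta_reduce
    rw [dif_pos hx]
    exact part3 η₁ η₂ η₃ h1 h2 h3 j k _ _ _ _ hA hB
      ((mem_K3_iff η₁ η₂ η₃ _).2 ⟨hx.choose.1, rfl⟩) ((mem_K3_iff η₁ η₂ η₃ _).2 ⟨hx.choose.2, rfl⟩)
      hx.choose_spec.symm
end
end
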